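/- For every N ∈ ℕ and every 0 ≤ n ≤ N, almost surely: L^{(2−2α)(N−n)} · S_{N−n}Q_{N−n}( ξ_{−N} · Γ_{N−n}ξ_{−N} − c_{N−n} ) = Σ_{k=1}^{N−n} L^{(2−2α)k} S_kQ_k( ξ_{−n−k} ⋄ P_1 ξ_{−n−k} ), where Γ_m := Σ_{j=1}^m L^{2(j−1)} P_j, the product ξ_{−N} · Γ_{N−n}ξ_{−N} is pointwise, c_{N−n} := E[ ξ_{−N}(x)·(Γ_{N−n}ξ_{−N})(x) ] = (1 − L^{−d}) Σ_{k=1}^{N−n} L^{(2−d)(k−1)} (independent of x ∈ Λ^N), and (ξ_{−m} ⋄ P_1ξ_{−m})(x) := ξ_{−m}(x)·(P_1ξ_{−m})(x) − (1 − L^{−d}). -/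

import Mathlib

open MeasureTheory ProbabilityTheory Filter

namespace Hier

/-! ## The hierarchical lattice

A point of the unit lattice `Λ^N = (ℤ/L^Nℤ)^d` (for `L` odd) is encoded by its
balanced base-`L` digits: the coordinate `i` of the point is
`∑_{k<N} L^k · (x i k)`, where the digit `x i k ∈ ZMod L` is identified with its
representative in `{-(L-1)/2, …, (L-1)/2}`.  The level-`n` block `B_n(x)` is the
set of points sharing with `x` all digits of index `≥ n`, and the centre of a
level-`n` block is the point all of whose digits of index `< n` vanish. -/

variable (L d : ℕ)

/-- A point of the unit lattice `Λ^N`, in hierarchical digit coordinates. -/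
abbrev Pt (N : ℕ) : Type := Fin d → Fin N → ZMod L

/-- Transport along an equality of lattice sizes. -/
def reindex {M M' : ℕ} (h : M = M') (z : Pt L d M) : Pt L d M' :=
  fun i k => z i (Fin.cast h.symm k)

/-- Replace the `n` lowest digits of `x` by `a`; as `a` varies this enumerates
the level-`n` block `B_n(x)` of `x`. -/
def paste {N n : ℕ} (hn : n ≤ N) (x : Pt L d N) (a : Fin d → Fin n → ZMod L) :
    Pt L d N :=
  fun i k => if h : (k : ℕ) < n then a i ⟨k, h⟩ else x i k

/-- The centre of the level-`m` block of `Λ^N` indexed by `z ∈ Λ^{N-m}` (the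
point `L^m z`). -/
def embed {N m : ℕ} (hm : m ≤ N) (z : Pt L d (N - m)) : Pt L d N :=
  fun i k =>
    if h : m ≤ (k : ℕ) then z i ⟨(k : ℕ) - m, by have := k.isLt; omega⟩ else 0

variable [NeZero L]

/-- The averaging operator `Q_n g (x) = L^{-nd} ∑_{y ∈ B_n(x)} g(y)`. -/
noncomputable def Qop {N : ℕ} (n : ℕ) (hn : n ≤ N) (g : Pt L d N → ℝ) :
    Pt L d N → ℝ :=
  fun x => ((L : ℝ) ^ (n * d))⁻¹ * ∑ a : Fin d → Fin n → ZMod L, g (paste L d hn x a)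

/-- The fluctuation operator `P_n = Q_{n-1} - Q_n` (for `1 ≤ n ≤ N`). -/
noncomputable def Pop {N : ℕ} (n : ℕ) (hn : n ≤ N) (g : Pt L d N → ℝ) :
    Pt L d N → ℝ :=
  fun x => Qop L d (n - 1) (le_trans (Nat.sub_le n 1) hn) g x - Qop L d n hn g x

/-- The rescaling `S_m`, sending `f : Λ^N → ℝ` to `S_m f : Λ^{N-m} → ℝ`,
`(S_m f)(z) = f(L^m z)`.  In particular `scale … (Qop …)` is the coarse
graining `S_m Q_m`. -/
noncomputable def scale {N m : ℕ} (hm : m ≤ N) (f : Pt L d N → ℝ) :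
    Pt L d (N - m) → ℝ :=
  fun z => f (embed L d hm z)

/-- The hierarchical Green operator `G_N = ∑_{k=1}^N L^{2(k-1)} P_k`. -/
noncomputable def green (N : ℕ) (g : Pt L d N → ℝ) : Pt L d N → ℝ :=
  fun x => ∑ k : Fin N, (L : ℝ) ^ (2 * (k : ℕ)) * Pop L d ((k : ℕ) + 1) k.isLt g x

/-- The (negative of the) hierarchical Laplacian
`(-Δ_{H,N}) = ∑_{n=1}^N L^{-2(n-1)} P_n`. -/
noncomputable def lap (N : ℕ) (g : Pt L d N → ℝ) : Pt L d N → ℝ :=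
  fun x => ∑ k : Fin N, ((L : ℝ) ^ (2 * (k : ℕ)))⁻¹ * Pop L d ((k : ℕ) + 1) k.isLt g x

/-- The fluctuation propagator `Γ_m = ∑_{k=1}^m L^{2(k-1)} P_k` acting on
functions on `Λ^N` (`m ≤ N`). -/
noncomputable def gammaProp {N : ℕ} (m : ℕ) (hm : m ≤ N) (g : Pt L d N → ℝ) :
    Pt L d N → ℝ :=
  fun x => ∑ k : Fin m, (L : ℝ) ^ (2 * (k : ℕ)) *
    Pop L d ((k : ℕ) + 1) (le_trans k.isLt hm) g x

/-- `x` and `y` lie in the same level-`m` block of `Λ^N`. -/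
def sameBlock {N : ℕ} (m : ℕ) (x y : Pt L d N) : Prop :=
  ∀ (i : Fin d) (k : Fin N), m ≤ (k : ℕ) → x i k = y i k


variable {Ω : Type*} [MeasurableSpace Ω]

/-- A **consistent hierarchical white noise**: a family `(ξ_{-n})_{n ∈ ℕ}` of
random functions `Λ^n → ℝ` such that for every `n` the variables
`(ξ_{-n}(x))_{x ∈ Λ^n}` are independent standard Gaussians and, for every `n`,
`ξ_{-n} = L^{2-α} · S₁Q₁ ξ_{-(n+1)}` almost surely, where `α := 2 - d/2`. -/
structure WhiteNoise (P : Measure Ω) where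
  ξ : (n : ℕ) → Pt L d n → Ω → ℝ
  meas : ∀ n x, Measurable (ξ n x)
  gauss : ∀ n x, P.map (ξ n x) = gaussianReal 0 1
  indep : ∀ n, iIndepFun (ξ n) P
  consistent : ∀ n : ℕ, ∀ᵐ ω ∂P, ∀ z : Pt L d n,
    ξ n z ω = (L : ℝ) ^ ((2 : ℝ) - ((2 : ℝ) - (d : ℝ) / 2)) *
      scale L d (Nat.le_add_left 1 n)
        (Qop L d 1 (Nat.le_add_left 1 n) (fun y => ξ (n + 1) y ω))
        (reindex L d (by omega) z)

/-- The Wick product `(f ⋄ P₁f)(x) = f(x)·(P₁f)(x) − (1 − L^{-d})` of a field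
of independent standard Gaussians with its `P₁`-fluctuation. -/
noncomputable def wickP1 {N : ℕ} (hN : 1 ≤ N) (f : Pt L d N → ℝ) :
    Pt L d N → ℝ :=
  fun x => f x * Pop L d 1 hN f x - (1 - ((L : ℝ) ^ d)⁻¹)

/-- The second-chaos field
`db^{(N)}_{-n} = ∑_{k=1}^{N-n} L^{(2-2α)k} S_k Q_k (ξ_{-n-k} ⋄ P₁ ξ_{-n-k})`,
with `α := 2 - d/2`. -/
noncomputable def db {P : Measure Ω} (W : WhiteNoise L d P) (N n : ℕ) (ω : Ω) :
    Pt L d n → ℝ :=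
  fun z => ∑ k : Fin (N - n),
    (L : ℝ) ^ (((2 : ℝ) - 2 * ((2 : ℝ) - (d : ℝ) / 2)) * (((k : ℕ) : ℝ) + 1)) *
      scale L d (Nat.le_add_left ((k : ℕ) + 1) n)
        (Qop L d ((k : ℕ) + 1) (Nat.le_add_left ((k : ℕ) + 1) n)
          (wickP1 L d (by omega) (fun y => W.ξ (n + ((k : ℕ) + 1)) y ω)))
        (reindex L d (by omega) z)

/-- `L^{-κ_s n} · max( max_{x ∈ Λ^n} |ξ_{-n}(x)| , max_{x ∈ Λ^n} |db^{(N)}_{-n}(x)|^{1/2} )`. -/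
noncomputable def normBlock {P : Measure Ω} (W : WhiteNoise L d P) (κs : ℝ)
    (N n : ℕ) (ω : Ω) : ℝ :=
  (L : ℝ) ^ (-(κs * (n : ℝ))) *
    max (⨆ x : Pt L d n, |W.ξ n x ω|)
      (⨆ x : Pt L d n, |db L d W N n ω x| ^ ((1 : ℝ) / 2))

/-- The norm `⦀ξ, db⦀ = sup_{N ∈ ℕ} max_{0 ≤ n ≤ N} normBlock(N, n)`,
valued in `ℝ≥0∞`. -/
noncomputable def enorm {P : Measure Ω} (W : WhiteNoise L d P) (κs : ℝ)
    (ω : Ω) : ENNReal :=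
  ⨆ (N : ℕ) (n : Fin (N + 1)), ENNReal.ofReal (normBlock L d W κs N n ω)

/-- The good event `Ω_g = { ⦀ξ, db⦀ ≤ (2g)⁻¹ }`. -/
def goodEvent {P : Measure Ω} (W : WhiteNoise L d P) (κs g : ℝ) : Set Ω :=
  {ω | enorm L d W κs ω ≤ ENNReal.ofReal (2 * g)⁻¹}

end Hier

/-!
Iterating the consistency relation expresses every coarser noise through the finest one:
`ξ_{-(N-j)} = L^{dj/2} S_j Q_j ξ_{-N}`. As `Q_j ξ_{-N}` is constant on level-`j` blocks, `P₁` of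
its rescaling is the rescaling of `P_{j+1} ξ_{-N}`, so `ξ_{-(N-j)} ⋄ P₁ ξ_{-(N-j)}` is
`L^{dj} S_j((Q_j ξ_{-N})·(P_{j+1} ξ_{-N})) - (1 - L^{-d})`, and coarse-graining it by `S_k Q_k`
with `k = N - n - j` gives `S_{N-n} Q_{N-n}` of the same product. On the other side,
`P_{j+1} ξ_{-N}` is constant on level-`j` blocks, so under `Q_{N-n}` the factor `ξ_{-N}` in front
of it may be replaced by `Q_j ξ_{-N}`. The two sides thus agree scale by scale, the `j`-th term
of `Γ_{N-n}` matching the `(N-n-j)`-th term of `db`, and the Wick constants add up to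
`L^{(2-2α)(N-n)} c_{N-n}`. That `c_{N-n}` is the mean of `ξ_{-N}·Γ_{N-n}ξ_{-N}` follows from
`E[ξ(x)·Q_r ξ(x)] = L^{-rd}`.
-/

namespace Hier

variable {L d : ℕ}

/-- The centre `L^j z ∈ Λ^N` of the level-`j` block indexed by `z ∈ Λ^M`. Relating the sizes by
`M + j = N`, rather than by `M = N - j` as `embed` does, keeps compositions free of casts. -/
def centre {M N : ℕ} (j : ℕ) (h : M + j = N) (z : Pt L d M) : Pt L d N :=
  fun i k => if hk : j ≤ (k : ℕ) then z i ⟨(k : ℕ) - j, by have := k.isLt; omega⟩ else 0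

lemma embed_reindex {M N m : ℕ} (hm : m ≤ N) (e : M = N - m) (z : Pt L d M) :
    embed L d hm (reindex L d e z) = centre m (by omega) z := by
  subst e
  rfl

lemma centre_zero {M : ℕ} (z : Pt L d M) : centre 0 (Nat.add_zero M) z = z := by
  funext i k
  simp [centre]

lemma centre_centre {A B N K j s : ℕ} (e : A + K = B) (e' : B + j = N) (hs : K + j = s)
    (z : Pt L d A) :
    centre j e' (centre K e z) = centre s (by omega) z := by
  subst hs
  funext i k
  unfold centre
  by_cases hk : K + j ≤ (k : ℕ)
  · rw [dif_pos (by omega : j ≤ (k : ℕ)), dif_pos hk]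
    simp only
    rw [dif_pos (by omega : K ≤ (k : ℕ) - j)]
    exact congrArg (z i) (Fin.ext (by simp only; omega))
  · by_cases hj : j ≤ (k : ℕ)
    · rw [dif_pos hj, dif_neg hk]
      simp only
      rw [dif_neg (by omega : ¬ K ≤ (k : ℕ) - j)]
    · rw [dif_neg hj, dif_neg hk]

lemma paste_eq_self_iff {N r : ℕ} (hr : r ≤ N) (x : Pt L d N) (a : Fin d → Fin r → ZMod L) :
    paste L d hr x a = x ↔ a = fun i t => x i (Fin.castLE hr t) := by
  constructor
  · rintro h
    funext i t
    simpa [paste] using congrFun (congrFun h i) (Fin.castLE hr t)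
  · rintro rfl
    funext i k
    unfold paste
    split_ifs <;> rfl

lemma sameBlock_paste {N j : ℕ} (hj : j ≤ N) (x : Pt L d N) (a : Fin d → Fin j → ZMod L) :
    sameBlock L d j (paste L d hj x a) x := by
  intro i k hk
  simp [paste, Nat.not_lt.2 hk]

lemma sameBlock.mono {N j j' : ℕ} {x y : Pt L d N} (h : sameBlock L d j x y) (hjj' : j ≤ j') :
    sameBlock L d j' x y :=
  fun i k hk => h i k (hjj'.trans hk)

lemma paste_eq_paste_of_sameBlock {N j : ℕ} (hj : j ≤ N) {x y : Pt L d N}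
    (h : sameBlock L d j x y) (a : Fin d → Fin j → ZMod L) :
    paste L d hj x a = paste L d hj y a := by
  funext i k
  unfold paste
  split_ifs with hk
  · rfl
  · exact h i k (Nat.not_lt.1 hk)

def appendDigits (j r : ℕ) (b : Fin d → Fin j → ZMod L) (a : Fin d → Fin r → ZMod L) :
    Fin d → Fin (j + r) → ZMod L :=
  fun i t => if h : (t : ℕ) < j then b i ⟨t, h⟩ else a i ⟨(t : ℕ) - j, by omega⟩

def appendDigitsEquiv (j r : ℕ) :
    ((Fin d → Fin j → ZMod L) × (Fin d → Fin r → ZMod L)) ≃ (Fin d → Fin (j + r) → ZMod L) where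
  toFun p := appendDigits j r p.1 p.2
  invFun c := (fun i t => c i (Fin.castAdd r t), fun i t => c i (Fin.natAdd j t))
  left_inv := by
    rintro ⟨b, a⟩
    ext i t <;> simp [appendDigits]
  right_inv := by
    intro c
    funext i t
    dsimp only [appendDigits]
    split_ifs with h
    · rfl
    · exact congrArg (c i) (Fin.ext (by simp only [Fin.natAdd_mk]; omega))

lemma paste_appendDigits {N j r : ℕ} (hjr : j + r ≤ N) (hj : j ≤ N) (x : Pt L d N)
    (b b' : Fin d → Fin j → ZMod L) (a : Fin d → Fin r → ZMod L) :
    paste L d hjr x (appendDigits j r b a) =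
      paste L d hj (paste L d hjr x (appendDigits j r b' a)) b := by
  funext i k
  unfold paste appendDigits
  by_cases h1 : (k : ℕ) < j
  · simp [h1, show (k : ℕ) < j + r by omega]
  · simp [h1]

lemma paste_centre {M N j r : ℕ} (e : M + j = N) (hr : r ≤ M) (hjr : j + r ≤ N)
    (z : Pt L d M) (a : Fin d → Fin r → ZMod L) :
    paste L d hjr (centre j e z) (appendDigits j r (fun _ _ => 0) a) =
      centre j e (paste L d hr z a) := by
  funext i k
  unfold paste centre appendDigits
  by_cases h1 : (k : ℕ) < j
  · simp [h1, show (k : ℕ) < j + r by omega, show ¬ j ≤ (k : ℕ) by omega]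
  · by_cases h2 : (k : ℕ) < j + r
    · simp [h1, h2, show j ≤ (k : ℕ) by omega, show (k : ℕ) - j < r by omega]
    · simp [h2, show j ≤ (k : ℕ) by omega, show ¬ (k : ℕ) - j < r by omega]

def IsBlockConstant {N : ℕ} (j : ℕ) (h : Pt L d N → ℝ) : Prop :=
  ∀ x y, sameBlock L d j x y → h x = h y

lemma IsBlockConstant.anti {N j j' : ℕ} {h : Pt L d N → ℝ} (hh : IsBlockConstant j' h)
    (hjj' : j ≤ j') : IsBlockConstant j h :=
  fun x y hxy => hh x y (hxy.mono hjj')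

lemma isBlockConstant_zero {N : ℕ} (h : Pt L d N → ℝ) : IsBlockConstant 0 h := by
  intro x y hxy
  congr
  funext i k
  exact hxy i k k.val.zero_le



variable [NeZero L]

lemma sum_appendDigits {j r : ℕ} (F : (Fin d → Fin (j + r) → ZMod L) → ℝ) :
    ∑ c, F c = ∑ a : Fin d → Fin r → ZMod L, ∑ b : Fin d → Fin j → ZMod L,
      F (appendDigits j r b a) := by
  rw [← (appendDigitsEquiv j r).sum_comp F, Fintype.sum_prod_type_right]
  rfl

lemma isBlockConstant_Qop {N m : ℕ} (hm : m ≤ N) (g : Pt L d N → ℝ) :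
    IsBlockConstant m (Qop L d m hm g) := by
  intro x y hxy
  simp only [Qop, paste_eq_paste_of_sameBlock hm hxy]

lemma isBlockConstant_Pop {N k : ℕ} (hk : k + 1 ≤ N) (g : Pt L d N → ℝ) :
    IsBlockConstant k (Pop L d (k + 1) hk g) := by
  intro x y hxy
  simp only [Pop, Nat.add_sub_cancel]
  rw [isBlockConstant_Qop _ g x y hxy,
    (isBlockConstant_Qop hk g).anti k.le_succ x y hxy]

lemma card_digits (j : ℕ) : Fintype.card (Fin d → Fin j → ZMod L) = L ^ (j * d) := by
  simp [ZMod.card, ← pow_mul, mul_comm]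

lemma IsBlockConstant.Qop_eq {N j : ℕ} (hj : j ≤ N) {h : Pt L d N → ℝ}
    (hh : IsBlockConstant j h) (x : Pt L d N) : Qop L d j hj h x = h x := by
  have hL : (L : ℝ) ^ (j * d) ≠ 0 := pow_ne_zero _ (Nat.cast_ne_zero.2 (NeZero.ne L))
  simp only [Qop, hh _ x (sameBlock_paste hj x _), Finset.sum_const, Finset.card_univ,
    card_digits, nsmul_eq_mul, Nat.cast_pow]
  field_simp

lemma Qop_zero {N : ℕ} (h0 : 0 ≤ N) (g : Pt L d N → ℝ) (x : Pt L d N) :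
    Qop L d 0 h0 g x = g x :=
  (isBlockConstant_zero g).Qop_eq h0 x

lemma Qop_const_mul {N r : ℕ} (hr : r ≤ N) (g : Pt L d N → ℝ) (c : ℝ) (x : Pt L d N) :
    Qop L d r hr (fun y => c * g y) x = c * Qop L d r hr g x := by
  simp only [Qop, ← Finset.mul_sum]
  ring

lemma Qop_sub_const {N r : ℕ} (hr : r ≤ N) (g : Pt L d N → ℝ) (c : ℝ) (x : Pt L d N) :
    Qop L d r hr (fun y => g y - c) x = Qop L d r hr g x - c := by
  have hc : Qop L d r hr (fun _ => c) x = c :=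
    IsBlockConstant.Qop_eq hr (fun _ _ _ => rfl) x
  simp only [Qop, Finset.sum_sub_distrib, mul_sub] at hc ⊢
  rw [hc]

lemma Qop_sum {N r : ℕ} (hr : r ≤ N) {ι : Type*} (s : Finset ι) (u : ι → Pt L d N → ℝ)
    (x : Pt L d N) :
    Qop L d r hr (fun y => ∑ k ∈ s, u k y) x = ∑ k ∈ s, Qop L d r hr (u k) x := by
  simp only [Qop]
  rw [Finset.sum_comm, Finset.mul_sum]

lemma Qop_split {N j r : ℕ} (hjr : j + r ≤ N) (hj : j ≤ N) (F : Pt L d N → ℝ)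
    (x : Pt L d N) :
    Qop L d (j + r) hjr F x = ((L : ℝ) ^ (r * d))⁻¹ *
      ∑ a : Fin d → Fin r → ZMod L,
        Qop L d j hj F (paste L d hjr x (appendDigits j r (fun _ _ => 0) a)) := by
  simp only [Qop, sum_appendDigits (fun c => F (paste L d hjr x c)), Finset.mul_sum,
    ← paste_appendDigits hjr hj x _ (fun _ _ => 0), ← mul_assoc, ← mul_inv, ← pow_add]
  ring_nf

lemma Qop_Qop {N j m : ℕ} (hj : j ≤ N) (hm : m ≤ N) (hjm : j ≤ m)
    (g : Pt L d N → ℝ) (x : Pt L d N) :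
    Qop L d m hm (Qop L d j hj g) x = Qop L d m hm g x := by
  obtain ⟨r, rfl⟩ := Nat.exists_eq_add_of_le hjm
  simp only [Qop_split hm hj _ x, (isBlockConstant_Qop hj g).Qop_eq hj]

lemma IsBlockConstant.Qop_mul {N j : ℕ} (hj : j ≤ N) {g : Pt L d N → ℝ}
    (hg : IsBlockConstant j g) (f : Pt L d N → ℝ) (x : Pt L d N) :
    Qop L d j hj (fun y => f y * g y) x = Qop L d j hj f x * g x := by
  simp only [Qop, hg _ x (sameBlock_paste hj x _), ← Finset.sum_mul, mul_assoc]

lemma IsBlockConstant.Qop_mul_of_le {N j m : ℕ} (hj : j ≤ N) (hm : m ≤ N) (hjm : j ≤ m)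
    {g : Pt L d N → ℝ} (hg : IsBlockConstant j g) (f : Pt L d N → ℝ) (x : Pt L d N) :
    Qop L d m hm (fun y => f y * g y) x = Qop L d m hm (fun y => Qop L d j hj f y * g y) x := by
  rw [← Qop_Qop hj hm hjm]
  congr 1
  funext y
  exact hg.Qop_mul hj f y

lemma IsBlockConstant.Qop_comp_centre {M N j r s : ℕ} (e : M + j = N) (hr : r ≤ M)
    (hs : j + r = s) (hsN : s ≤ N) {h : Pt L d N → ℝ} (hh : IsBlockConstant j h)
    (w : Pt L d M) :
    Qop L d r hr (fun y => h (centre j e y)) w = Qop L d s hsN h (centre j e w) := by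
  subst hs
  have hj : j ≤ N := by omega
  rw [Qop_split hsN hj h]
  simp only [hh.Qop_eq hj, paste_centre e hr hsN]
  rfl

section Gaussian

variable {Ω ι : Type*} [MeasurableSpace Ω] {P : Measure Ω}

lemma memLp_two_of_hasLaw_gaussianReal {Y : Ω → ℝ} (hY : HasLaw Y (gaussianReal 0 1) P) :
    MemLp Y 2 P := by
  have h := memLp_id_gaussianReal (μ := 0) (v := 1) 2
  rw [← hY.map_eq] at h
  exact (memLp_map_measure_iff h.aestronglyMeasurable hY.aemeasurable).1 h

variable {X : ι → Ω → ℝ}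

lemma integrable_mul_of_hasLaw_gaussianReal (hX : ∀ i, HasLaw (X i) (gaussianReal 0 1) P)
    (i j : ι) : Integrable (fun ω => X i ω * X j ω) P :=
  (memLp_two_of_hasLaw_gaussianReal (hX i)).integrable_mul
    (memLp_two_of_hasLaw_gaussianReal (hX j))

lemma integral_mul_of_iIndepFun_gaussianReal [DecidableEq ι]
    (hX : ∀ i, HasLaw (X i) (gaussianReal 0 1) P) (hind : iIndepFun X P) (i j : ι) :
    ∫ ω, X i ω * X j ω ∂P = if i = j then 1 else 0 := by
  split_ifs with hij
  · subst hij
    have hvar := (hX i).variance_eq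
    rw [variance_id_gaussianReal, variance_of_integral_eq_zero (hX i).aemeasurable
      ((hX i).integral_eq.trans integral_id_gaussianReal)] at hvar
    simpa [← sq] using hvar
  · rw [(hind.indepFun hij).integral_fun_mul_eq_mul_integral
      (hX i).aemeasurable.aestronglyMeasurable (hX j).aemeasurable.aestronglyMeasurable,
      (hX i).integral_eq, integral_id_gaussianReal, zero_mul]

end Gaussian

section Covariance

lemma mul_Qop_eq_sum {M r : ℕ} (hr : r ≤ M) (c : ℝ) (g : Pt L d M → ℝ) (x : Pt L d M) :
    c * Qop L d r hr g x =
      ∑ a : Fin d → Fin r → ZMod L, ((L : ℝ) ^ (r * d))⁻¹ * (c * g (paste L d hr x a)) := by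
  simp only [Qop, Finset.mul_sum]
  exact Finset.sum_congr rfl fun a _ => by ring

variable {Ω : Type*} [MeasurableSpace Ω] {P : Measure Ω} {M : ℕ} {X : Pt L d M → Ω → ℝ}

lemma integrable_mul_Qop (hX : ∀ x, HasLaw (X x) (gaussianReal 0 1) P) {r : ℕ} (hr : r ≤ M)
    (x : Pt L d M) : Integrable (fun ω => X x ω * Qop L d r hr (fun y => X y ω) x) P := by
  simp only [mul_Qop_eq_sum hr]
  exact integrable_finsetSum _ fun a _ =>
    (integrable_mul_of_hasLaw_gaussianReal hX x _).const_mul _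

lemma integral_mul_Qop (hX : ∀ x, HasLaw (X x) (gaussianReal 0 1) P) (hind : iIndepFun X P)
    {r : ℕ} (hr : r ≤ M) (x : Pt L d M) :
    ∫ ω, X x ω * Qop L d r hr (fun y => X y ω) x ∂P = ((L : ℝ) ^ (r * d))⁻¹ := by
  simp only [mul_Qop_eq_sum hr]
  rw [integral_finsetSum _ fun a _ => (integrable_mul_of_hasLaw_gaussianReal hX x _).const_mul _]
  simp only [integral_const_mul, integral_mul_of_iIndepFun_gaussianReal hX hind, eq_comm (a := x),
    paste_eq_self_iff, ← Finset.mul_sum, Finset.sum_ite_eq', Finset.mem_univ, if_true, mul_one]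

lemma integrable_mul_Pop (hX : ∀ x, HasLaw (X x) (gaussianReal 0 1) P) {k : ℕ}
    (hk : k + 1 ≤ M) (x : Pt L d M) :
    Integrable (fun ω => X x ω * Pop L d (k + 1) hk (fun y => X y ω) x) P := by
  simp only [Pop, Nat.add_sub_cancel, mul_sub]
  exact (integrable_mul_Qop hX _ x).sub (integrable_mul_Qop hX _ x)

lemma integral_mul_Pop (hX : ∀ x, HasLaw (X x) (gaussianReal 0 1) P) (hind : iIndepFun X P)
    {k : ℕ} (hk : k + 1 ≤ M) (x : Pt L d M) :
    ∫ ω, X x ω * Pop L d (k + 1) hk (fun y => X y ω) x ∂P =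
      ((L : ℝ) ^ (k * d))⁻¹ - ((L : ℝ) ^ ((k + 1) * d))⁻¹ := by
  simp only [Pop, Nat.add_sub_cancel, mul_sub]
  rw [integral_sub (integrable_mul_Qop hX _ x) (integrable_mul_Qop hX _ x),
    integral_mul_Qop hX hind, integral_mul_Qop hX hind]

lemma integral_mul_gammaProp (hX : ∀ x, HasLaw (X x) (gaussianReal 0 1) P)
    (hind : iIndepFun X P) {m : ℕ} (hm : m ≤ M) (x : Pt L d M) :
    ∫ ω, X x ω * gammaProp L d m hm (fun y => X y ω) x ∂P =
      ∑ k : Fin m, (L : ℝ) ^ (2 * (k : ℕ)) *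
        (((L : ℝ) ^ ((k : ℕ) * d))⁻¹ - ((L : ℝ) ^ (((k : ℕ) + 1) * d))⁻¹) := by
  simp only [gammaProp, Finset.mul_sum, mul_left_comm (X x _)]
  rw [integral_finsetSum _ fun k _ => (integrable_mul_Pop hX _ x).const_mul _]
  simp only [integral_const_mul, integral_mul_Pop hX hind]

end Covariance

section Renormalisation

/-- `(Q_j f)·(P_{j+1} f)`: at the centres of level-`j` blocks, for `f = ξ_{-N}`, it is
`L^{-dj} ξ_{-(N-j)}·P₁ξ_{-(N-j)}`. -/
noncomputable def avgMulFluct {N : ℕ} (j : ℕ) (hj : j + 1 ≤ N) (f : Pt L d N → ℝ) :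
    Pt L d N → ℝ :=
  fun y => Qop L d j (by omega) f y * Pop L d (j + 1) hj f y

lemma isBlockConstant_avgMulFluct {N j : ℕ} (hj : j + 1 ≤ N) (f : Pt L d N → ℝ) :
    IsBlockConstant j (avgMulFluct j hj f) := by
  intro x y hxy
  simp only [avgMulFluct, isBlockConstant_Qop _ f x y hxy, isBlockConstant_Pop hj f x y hxy]

lemma Qop_mul_gammaProp {N m : ℕ} (hm : m ≤ N) (f : Pt L d N → ℝ) (x : Pt L d N) :
    Qop L d m hm (fun y => f y * gammaProp L d m hm f y) x =
      ∑ k : Fin m, (L : ℝ) ^ (2 * (k : ℕ)) *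
        Qop L d m hm (avgMulFluct k (by omega) f) x := by
  simp only [gammaProp, Finset.mul_sum, mul_left_comm (f _), Qop_sum, Qop_const_mul]
  refine Finset.sum_congr rfl fun k _ => ?_
  rw [(isBlockConstant_Pop _ f).Qop_mul_of_le (by omega) hm k.isLt.le]
  rfl

lemma mul_Pop_one_of_eq_Qop_centre {M N j : ℕ} (h : M + j = N) (hj : j + 1 ≤ N) (hM : 1 ≤ M)
    {f : Pt L d N → ℝ} {g : Pt L d M → ℝ} {c : ℝ}
    (hg : ∀ w, g w = c * Qop L d j (by omega) f (centre j h w)) (w : Pt L d M) :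
    g w * Pop L d 1 hM g w = c ^ 2 * avgMulFluct j hj f (centre j h w) := by
  have hQ1 : Qop L d 1 hM g w = c * Qop L d (j + 1) hj f (centre j h w) := by
    rw [funext hg, Qop_const_mul, (isBlockConstant_Qop _ f).Qop_comp_centre h hM rfl hj,
      Qop_Qop _ hj j.le_succ]
  simp only [Pop, Nat.sub_self, Qop_zero, hQ1, avgMulFluct, Nat.add_sub_cancel, hg w]
  ring

lemma Qop_wickP1_centre {n M N j K s : ℕ} (h : M + j = N) (hj : j + 1 ≤ N) (hM : 1 ≤ M)
    (e : n + K = M) (hK : K ≤ M) (hs : K + j = s) (hsN : s ≤ N)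
    {f : Pt L d N → ℝ} {g : Pt L d M → ℝ} {c : ℝ}
    (hg : ∀ w, g w = c * Qop L d j (by omega) f (centre j h w)) (z : Pt L d n) :
    Qop L d K hK (wickP1 L d hM g) (centre K e z) =
      c ^ 2 * Qop L d s hsN (avgMulFluct j hj f) (centre s (by omega) z) -
        (1 - ((L : ℝ) ^ d)⁻¹) := by
  unfold wickP1
  rw [Qop_sub_const]
  simp only [mul_Pop_one_of_eq_Qop_centre h hj hM hg, Qop_const_mul]
  rw [(isBlockConstant_avgMulFluct hj f).Qop_comp_centre h hK (by omega) hsN,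
    centre_centre _ _ hs]

end Renormalisation

section Exponents

variable {x : ℝ}

lemma sum_Icc_rpow_eq (hx : 0 ≤ x) (y : ℝ) (m : ℕ) :
    ∑ k ∈ Finset.Icc 1 m, x ^ (y * ((k : ℝ) - 1)) = ∑ k : Fin m, (x ^ y) ^ (k : ℕ) := by
  rw [← Finset.Ico_add_one_right_eq_Icc, Finset.sum_Ico_eq_sum_range, Nat.add_sub_cancel,
    Fin.sum_univ_eq_sum_range (fun k => (x ^ y) ^ k)]
  refine Finset.sum_congr rfl fun k _ => ?_
  rw [← Real.rpow_mul_natCast hx]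
  push_cast
  ring_nf

lemma rpow_two_sub_mul_pow (hx : 0 < x) (n : ℕ) : x ^ ((2 : ℝ) - n) * x ^ n = x ^ 2 := by
  rw [Real.rpow_sub hx, Real.rpow_natCast, Real.rpow_two, div_mul_cancel₀ _ (by positivity)]

lemma rpow_two_sub_two_mul_two_sub_half_mul (hx : 0 ≤ x) (n t : ℕ) :
    x ^ (((2 : ℝ) - 2 * ((2 : ℝ) - (n : ℝ) / 2)) * (t : ℝ)) = (x ^ ((2 : ℝ) - n))⁻¹ ^ t := by
  rw [show ((2 : ℝ) - 2 * ((2 : ℝ) - (n : ℝ) / 2)) * t = -((2 : ℝ) - n) * t by ring,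
    Real.rpow_mul_natCast hx, Real.rpow_neg hx]

lemma rpow_two_sub_two_sub_half_sq (hx : 0 ≤ x) (n : ℕ) :
    (x ^ ((2 : ℝ) - ((2 : ℝ) - (n : ℝ) / 2))) ^ 2 = x ^ n := by
  rw [← Real.rpow_mul_natCast hx, ← Real.rpow_natCast x n]
  congr 1
  push_cast
  ring

variable {q b : ℝ}

lemma sum_mul_pow_mul_inv_sub (hb : b ≠ 0) (m : ℕ) :
    ∑ k : Fin m, (q * b) ^ (k : ℕ) * ((b ^ (k : ℕ))⁻¹ - (b ^ ((k : ℕ) + 1))⁻¹) =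
      (1 - b⁻¹) * ∑ k : Fin m, q ^ (k : ℕ) := by
  rw [Finset.mul_sum]
  refine Finset.sum_congr rfl fun k _ => ?_
  field_simp
  ring

lemma inv_pow_mul_sum_sub_eq_sum_rev (hq : q ≠ 0) {m : ℕ} (F : Fin m → ℝ) (C : ℝ) :
    q⁻¹ ^ m * (∑ k : Fin m, (q * b) ^ (k : ℕ) * F k - C * ∑ k : Fin m, q ^ (k : ℕ)) =
      ∑ k : Fin m, q⁻¹ ^ ((k : ℕ) + 1) * (b ^ (k.rev : ℕ) * F k.rev - C) := by
  rw [← Equiv.sum_comp Fin.revPerm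
      (fun k => q⁻¹ ^ ((k : ℕ) + 1) * (b ^ (k.rev : ℕ) * F k.rev - C)),
    Finset.mul_sum, mul_sub, Finset.mul_sum, Finset.mul_sum, ← Finset.sum_sub_distrib]
  refine Finset.sum_congr rfl fun k _ => ?_
  have hpow : q⁻¹ ^ m = q⁻¹ ^ ((Fin.revPerm k : ℕ) + 1) * q⁻¹ ^ (k : ℕ) := by
    rw [← pow_add, Fin.revPerm_apply, Fin.val_rev]
    congr 1
    omega
  have hk : q⁻¹ ^ (k : ℕ) * q ^ (k : ℕ) = 1 := by
    rw [inv_pow, inv_mul_cancel₀ (pow_ne_zero _ hq)]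
  rw [hpow]
  simp only [Fin.revPerm_apply, Fin.rev_rev]
  linear_combination q⁻¹ ^ ((k.rev : ℕ) + 1) * (b ^ (k : ℕ) * F k - C) * hk

end Exponents

section Consistency

variable {Ω : Type*} [MeasurableSpace Ω] {P : Measure Ω}

lemma WhiteNoise.hasLaw (W : WhiteNoise L d P) (n : ℕ) (x : Pt L d n) :
    HasLaw (W.ξ n x) (gaussianReal 0 1) P :=
  ⟨(W.meas n x).aemeasurable, W.gauss n x⟩

lemma WhiteNoise.ae_eq_Qop_centre (W : WhiteNoise L d P) (j : ℕ) {M N : ℕ} (h : M + j = N) :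
    ∀ᵐ ω ∂P, ∀ w : Pt L d M, W.ξ M w ω =
      ((L : ℝ) ^ ((2 : ℝ) - ((2 : ℝ) - (d : ℝ) / 2))) ^ j *
        Qop L d j (by omega) (fun y => W.ξ N y ω) (centre j h w) := by
  induction j generalizing M with
  | zero =>
    obtain rfl : N = M := by omega
    exact Filter.Eventually.of_forall fun ω w => by rw [Qop_zero, centre_zero, pow_zero, one_mul]
  | succ j ih =>
    filter_upwards [W.consistent M, ih (M := M + 1) (by omega)] with ω hcons hξ w
    have hj : j ≤ N := by omega
    rw [hcons w, scale, embed_reindex]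
    simp only [hξ, Qop_const_mul]
    rw [(isBlockConstant_Qop hj _).Qop_comp_centre _ _ rfl (by omega),
      Qop_Qop hj _ (by omega), centre_centre _ _ (Nat.add_comm 1 j), pow_succ]
    ring

lemma WhiteNoise.ae_db_eq (W : WhiteNoise L d P) {N n : ℕ} (hn : n ≤ N) :
    ∀ᵐ ω ∂P, ∀ z : Pt L d n, db L d W N n ω z =
      ∑ k : Fin (N - n), ((L : ℝ) ^ ((2 : ℝ) - d))⁻¹ ^ ((k : ℕ) + 1) *
        (((L : ℝ) ^ d) ^ (k.rev : ℕ) *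
          Qop L d (N - n) (Nat.sub_le N n)
            (avgMulFluct k.rev (by have := k.rev.isLt; omega) fun y => W.ξ N y ω)
            (centre (N - n) (by omega) z) -
          (1 - ((L : ℝ) ^ d)⁻¹)) := by
  have hL : (0 : ℝ) ≤ L := Nat.cast_nonneg L
  filter_upwards [ae_all_iff.2 fun k : Fin (N - n) => W.ae_eq_Qop_centre k.rev
    (M := n + ((k : ℕ) + 1)) (N := N) (by have := Fin.val_rev k; omega)] with ω hξ z
  refine Finset.sum_congr rfl fun k _ => ?_
  rw [← Nat.cast_add_one, rpow_two_sub_two_mul_two_sub_half_mul hL, scale, embed_reindex,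
    Qop_wickP1_centre (s := N - n) _ _ _ rfl _ (by have := Fin.val_rev k; omega) _ (hξ k),
    ← pow_mul, mul_comm _ 2, pow_mul, rpow_two_sub_two_sub_half_sq hL]

end Consistency

end Hier

open Hier in
/-- With `α := 2 - d/2` and
`c_{N-n} := E[ ξ_{-N}(x)·(Γ_{N-n}ξ_{-N})(x) ] = (1 - L^{-d}) ∑_{k=1}^{N-n} L^{(2-d)(k-1)}`
(independent of `x`), for every `N` and `0 ≤ n ≤ N`, almost surely:
`L^{(2-2α)(N-n)} · S_{N-n}Q_{N-n}( ξ_{-N} · Γ_{N-n}ξ_{-N} − c_{N-n} )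
  = ∑_{k=1}^{N-n} L^{(2-2α)k} S_kQ_k( ξ_{-n-k} ⋄ P₁ ξ_{-n-k} ) = db^{(N)}_{-n}`. -/
theorem statement_11 (L d : ℕ) [NeZero L]
    (Ω : Type) [MeasurableSpace Ω] (P : Measure Ω)
    (W : WhiteNoise L d P) (N n : ℕ) (hn : n ≤ N) :
    (∀ x : Pt L d N,
      ∫ ω, W.ξ N x ω *
          gammaProp L d (N - n) (Nat.sub_le N n) (fun y => W.ξ N y ω) x ∂P =
        (1 - ((L : ℝ) ^ d)⁻¹) *
          ∑ k ∈ Finset.Icc 1 (N - n), (L : ℝ) ^ (((2 : ℝ) - (d : ℝ)) * ((k : ℝ) - 1))) ∧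
    ∀ᵐ ω ∂P, ∀ z : Pt L d n,
      (L : ℝ) ^ (((2 : ℝ) - 2 * ((2 : ℝ) - (d : ℝ) / 2)) * ((N : ℝ) - (n : ℝ))) *
          scale L d (Nat.sub_le N n)
            (Qop L d (N - n) (Nat.sub_le N n)
              (fun y => W.ξ N y ω *
                  gammaProp L d (N - n) (Nat.sub_le N n) (fun y' => W.ξ N y' ω) y -
                (1 - ((L : ℝ) ^ d)⁻¹) *
                  ∑ k ∈ Finset.Icc 1 (N - n),
                    (L : ℝ) ^ (((2 : ℝ) - (d : ℝ)) * ((k : ℝ) - 1))))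
            (reindex L d (show n = N - (N - n) by omega) z) =
        db L d W N n ω z := by
  have hL : (0 : ℝ) < L := Nat.cast_pos.2 (Nat.pos_of_neZero L)
  have hLd : (L : ℝ) ^ d ≠ 0 := pow_ne_zero _ hL.ne'
  have hq : (L : ℝ) ^ ((2 : ℝ) - d) ≠ 0 := (Real.rpow_pos_of_pos hL _).ne'
  have hpow (k : ℕ) : (L : ℝ) ^ (2 * k) = ((L : ℝ) ^ ((2 : ℝ) - d) * (L : ℝ) ^ d) ^ k := by
    rw [pow_mul, rpow_two_sub_mul_pow hL]
  refine ⟨fun x => ?_, ?_⟩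
  · rw [integral_mul_gammaProp (W.hasLaw N) (W.indep N), sum_Icc_rpow_eq hL.le]
    simp only [hpow, pow_mul']
    exact sum_mul_pow_mul_inv_sub hLd _
  · filter_upwards [W.ae_db_eq hn] with ω hdb z
    rw [hdb, scale, embed_reindex, Qop_sub_const, Qop_mul_gammaProp, ← Nat.cast_sub hn,
      rpow_two_sub_two_mul_two_sub_half_mul hL.le, sum_Icc_rpow_eq hL.le]
    simp only [hpow]
    exact inv_pow_mul_sum_sub_eq_sum_rev hq
      (fun k => Qop L d (N - n) _ (avgMulFluct k _ fun y => W.ξ N y ω) _) _
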